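/- arXiv:1609.09802 — 6 statements merged into one kernel-verified Lean document; each statement's English description precedes it below -/
import Mathlib

section
/- If B is a torsion-free abelian group and T is a finite abelian group, then Ext¹(B, T) = 0, i.e. every abelian group extension of T by B splits. -/
/-!
A finitely generated torsion-free abelian group is free, so the extension splits over every
finitely generated subgroup of `B`. A splitting over all of `B` is a point of the product of the
fibres of `π`, which are finite (they are cosets of the finite kernel), lying in the closed sets
`{σ | σ (a + b) = σ a + σ b}`. Splittings over finitely generated subgroups show that this family
has the finite intersection property, so Tychonoff's theorem gives a point in all of them.
-/

open Function

section

variable {B E : Type*} [AddCommGroup B] [AddCommGroup E]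

theorem AddMonoidHom.finite_preimage_singleton (π : E →+ B) [Finite π.ker] (b : B) :
    Finite (π ⁻¹' {b}) := by
  rcases isEmpty_or_nonempty (π ⁻¹' {b}) with _ | ⟨e₀, he₀⟩
  · infer_instance
  refine Finite.of_injective (β := π.ker)
    (fun e => ⟨e.1 - e₀, by
      rw [AddMonoidHom.mem_ker, map_sub, (e.2 : π e = b), (he₀ : π e₀ = b), sub_self]⟩) ?_
  intro e e' h
  exact Subtype.ext (sub_left_injective (congrArg Subtype.val h))

theorem AddMonoidHom.exists_lift_of_fg_of_isAddTorsionFree {P : Type*} [AddCommGroup P]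
    [AddGroup.FG P] [IsAddTorsionFree P] (π : E →+ B) (hπ : Surjective π) (g : P →+ B) :
    ∃ l : P →+ E, π.comp l = g := by
  obtain ⟨l, hl⟩ :=
    Module.projective_lifting_property π.toIntLinearMap g.toIntLinearMap hπ
  exact ⟨l.toAddMonoidHom, congrArg LinearMap.toAddMonoidHom hl⟩

theorem AddMonoidHom.exists_section_additive_on_finset [IsAddTorsionFree B] (π : E →+ B)
    (hπ : Surjective π) (t : Finset (B × B)) :
    ∃ σ : B → E, (∀ b, π (σ b) = b) ∧ ∀ p ∈ t, σ (p.1 + p.2) = σ p.1 + σ p.2 := by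
  classical
  set B₀ := AddSubgroup.closure ((t.image Prod.fst ∪ t.image Prod.snd : Finset B) : Set B)
  obtain ⟨l, hl⟩ := π.exists_lift_of_fg_of_isAddTorsionFree hπ B₀.subtype
  have hπl (y : B₀) : π (l y) = y := DFunLike.congr_fun hl y
  refine ⟨fun b => if h : b ∈ B₀ then l ⟨b, h⟩ else surjInv hπ b, fun b => ?_, fun p hp => ?_⟩
  · dsimp only
    split_ifs with h
    · exact hπl ⟨b, h⟩
    · exact surjInv_eq hπ b
  · have h₁ : p.1 ∈ B₀ := AddSubgroup.subset_closure
      (Finset.mem_coe.2 (Finset.mem_union_left _ (Finset.mem_image_of_mem _ hp)))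
    have h₂ : p.2 ∈ B₀ := AddSubgroup.subset_closure
      (Finset.mem_coe.2 (Finset.mem_union_right _ (Finset.mem_image_of_mem _ hp)))
    simp only [dif_pos h₁, dif_pos h₂, dif_pos (B₀.add_mem h₁ h₂)]
    exact map_add l ⟨p.1, h₁⟩ ⟨p.2, h₂⟩

theorem AddMonoidHom.exists_section_of_finite_ker (π : E →+ B) [Finite π.ker]
    (hloc : ∀ t : Finset (B × B),
      ∃ σ : B → E, (∀ b, π (σ b) = b) ∧ ∀ p ∈ t, σ (p.1 + p.2) = σ p.1 + σ p.2) :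
    ∃ s : B →+ E, π.comp s = AddMonoidHom.id B := by
  let : TopologicalSpace E := ⊥
  have : DiscreteTopology E := ⟨rfl⟩
  have := π.finite_preimage_singleton
  let additiveAt (p : B × B) : Set (∀ b, π ⁻¹' {b}) :=
    {σ | (σ (p.1 + p.2) : E) = σ p.1 + σ p.2}
  have hclosed (p : B × B) : IsClosed (additiveAt p) :=
    isClosed_eq (continuous_subtype_val.comp (continuous_apply _))
      ((continuous_subtype_val.comp (continuous_apply _)).add
        (continuous_subtype_val.comp (continuous_apply _)))
  have hfip (t : Finset (B × B)) : (⋂ p ∈ t, additiveAt p).Nonempty := by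
    obtain ⟨σ, hσ, hadd⟩ := hloc t
    exact ⟨fun b => ⟨σ b, hσ b⟩, Set.mem_iInter₂.2 hadd⟩
  obtain ⟨σ, hσ⟩ := CompactSpace.iInter_nonempty hclosed hfip
  exact ⟨AddMonoidHom.mk' (fun b => σ b) fun a b => Set.mem_iInter.1 hσ (a, b),
    AddMonoidHom.ext fun b => (σ b).2⟩

end

theorem ext_torsionFree_finite_eq_zero_general {B T E : Type*} [AddCommGroup B] [AddCommGroup T]
    [AddCommGroup E] [Finite T]
    (hB : ∀ (x : B) (n : ℕ), n ≠ 0 → n • x = 0 → x = 0)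
    (ι : T →+ E) (π : E →+ B)
    (hπ : Function.Surjective π)
    (hexact : ι.range = π.ker) :
    ∃ s : B →+ E, π.comp s = AddMonoidHom.id B := by
  have : IsAddTorsionFree B :=
    ⟨fun n hn a b h => sub_eq_zero.1 (hB _ n hn (by rw [nsmul_sub]; exact sub_eq_zero.2 h))⟩
  have : Finite π.ker := hexact ▸ Finite.of_surjective _ ι.rangeRestrict_surjective
  exact π.exists_section_of_finite_ker (π.exists_section_additive_on_finset hπ)

/-- Every abelian extension `0 → T → E → B → 0` with `B` torsion-free and `T` finite splits,
i.e. `Ext(B, T) = 0`. -/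
theorem ext_torsionFree_finite_eq_zero {B T E : Type*} [AddCommGroup B] [AddCommGroup T]
    [AddCommGroup E] [Finite T]
    (hB : ∀ (x : B) (n : ℕ), n ≠ 0 → n • x = 0 → x = 0)
    (ι : T →+ E) (π : E →+ B)
    (hι : Function.Injective ι) (hπ : Function.Surjective π)
    (hexact : ι.range = π.ker) :
    ∃ s : B →+ E, π.comp s = AddMonoidHom.id B :=
  ext_torsionFree_finite_eq_zero_general hB ι π hπ hexact
end

section
/- Let R be an integral domain and n ≥ 2. Every normal nilpotent subgroup of G = T_n(R) is contained in UT_n(R) · Z(G); hence the Fitting subgroup of T_n(R) equals UT_n(R) · Z(T_n(R)). -/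
/-!
Let `g ∈ N` and let `i ⋖ j` be adjacent indices with `g i i ≠ g j j`. For upper triangular `u`
with `u i i = u j j`, the `(i, j)` entry of the commutator `⁅u, g⁆` satisfies
`⁅u, g⁆ i j * g j j * u j j = u i j * (g j j - g i i)`, so over a domain it is nonzero whenever
`u i j` is, and `⁅u, g⁆` again has equal diagonal entries at `i` and `j`. Starting from the
transvection `1 - E_ij`, whose commutator with `g` lies in `N` by normality, the iterated
commutators with `g` therefore never become trivial, contradicting nilpotency of `N`. Hence
adjacent, and so all, diagonal entries of `g` agree, and they are units since `g` is invertible.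
-/

open Matrix

/-- The group `T_n(R)` of invertible upper triangular `n × n` matrices,
as a subgroup of `GL_n(R)`. -/
def triangularGroup (n : ℕ) (R : Type*) [CommRing R] : Subgroup (GL (Fin n) R) where
  carrier := {g | ((g : Matrix (Fin n) (Fin n) R)).BlockTriangular id}
  one_mem' := by simpa using Matrix.blockTriangular_one
  mul_mem' := by
    intro a b ha hb
    simpa [Units.val_mul] using ha.mul hb
  inv_mem' := by
    intro g hg
    haveI : Invertible (g : Matrix (Fin n) (Fin n) R) := g.invertible
    have h := Matrix.blockTriangular_inv_of_blockTriangular hg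
    simpa [← Matrix.coe_units_inv] using h

open scoped commutatorElement

theorem Subgroup.exists_iterate_commutatorElement_eq_one {G : Type*} [Group G] {S : Subgroup G}
    (hS : Group.IsNilpotent S) {x g : G} (hx : x ∈ S) (hg : g ∈ S) :
    ∃ k, (fun y ↦ ⁅y, g⁆)^[k] x = 1 := by
  obtain ⟨k, hk⟩ := (S.isNilpotent_iff_lowerCentralSeries).1 hS
  have mem : ∀ m, (fun y ↦ ⁅y, g⁆)^[m] x ∈ S.lowerCentralSeries m := by
    intro m
    induction m with
    | zero => exact hx
    | succ m ih =>
      rw [Function.iterate_succ_apply']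
      exact commutator_mem_commutator ih hg
  exact ⟨k, by simpa [hk] using mem k⟩

theorem eq_of_forall_covBy {ι α : Type*} [LinearOrder ι] [SuccOrder ι] [IsSuccArchimedean ι]
    {f : ι → α} (hf : ∀ i j, i ⋖ j → f i = f j) (i j : ι) : f i = f j := by
  wlog hij : i ≤ j generalizing i j
  · exact (this j i (le_of_not_ge hij)).symm
  refine (Succ.rec_iff (p := fun k ↦ f i = f k) (fun k ↦ ?_) hij).1 rfl
  by_cases hk : IsMax k
  · rw [Order.succ_eq_iff_isMax.2 hk]
  · rw [hf k _ (Order.covBy_succ_of_not_isMax hk)]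

namespace Matrix.IsUpperTriangular

variable {ι R : Type*} [Fintype ι] [LinearOrder ι] [CommRing R] {M P : Matrix ι ι R}

theorem mul_apply_self (hM : M.IsUpperTriangular) (hP : P.IsUpperTriangular) (i : ι) :
    (M * P) i i = M i i * P i i := by
  refine Finset.sum_eq_single i (fun k _ hk ↦ ?_) (by simp)
  rcases hk.lt_or_gt with h | h
  · exact mul_eq_zero_of_left (hM h) _
  · exact mul_eq_zero_of_right _ (hP h)

theorem mul_apply_of_covBy (hM : M.IsUpperTriangular) (hP : P.IsUpperTriangular) {i j : ι}
    (hij : i ⋖ j) : (M * P) i j = M i i * P i j + M i j * P j j := by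
  refine Finset.sum_eq_add i j hij.ne (fun k _ hk ↦ ?_) (by simp) (by simp)
  rcases hk.1.lt_or_gt with h | h
  · exact mul_eq_zero_of_left (hM h) _
  · exact mul_eq_zero_of_right _ (hP ((not_lt.1 (hij.2 h)).lt_of_ne' hk.2))

variable [DecidableEq ι] {u g : GL ι R}

theorem units_inv (hg : (g : Matrix ι ι R).IsUpperTriangular) :
    ((g⁻¹ : GL ι R) : Matrix ι ι R).IsUpperTriangular := by
  have : Invertible (g : Matrix ι ι R) := g.invertible
  simpa [← coe_units_inv] using blockTriangular_inv_of_blockTriangular hg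

theorem units_apply_self_mul_inv_apply_self (hg : (g : Matrix ι ι R).IsUpperTriangular) (i : ι) :
    (g : Matrix ι ι R) i i * (g⁻¹ : GL ι R) i i = 1 := by
  rw [← mul_apply_self hg hg.units_inv, ← Units.val_mul, mul_inv_cancel, Units.val_one,
    one_apply_eq]

theorem commutatorElement (hu : (u : Matrix ι ι R).IsUpperTriangular)
    (hg : (g : Matrix ι ι R).IsUpperTriangular) :
    ((⁅u, g⁆ : GL ι R) : Matrix ι ι R).IsUpperTriangular := by
  simpa only [commutatorElement_def, Units.val_mul] using
    ((hu.mul hg).mul hu.units_inv).mul hg.units_inv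

theorem commutatorElement_apply_self (hu : (u : Matrix ι ι R).IsUpperTriangular)
    (hg : (g : Matrix ι ι R).IsUpperTriangular) (i : ι) :
    ((⁅u, g⁆ : GL ι R) : Matrix ι ι R) i i = 1 := by
  have hu' := units_apply_self_mul_inv_apply_self hu i
  have hg' := units_apply_self_mul_inv_apply_self hg i
  simp only [commutatorElement_def, Units.val_mul]
  rw [mul_apply_self ((hu.mul hg).mul hu.units_inv) hg.units_inv,
    mul_apply_self (hu.mul hg) hu.units_inv, mul_apply_self hu hg]
  linear_combination ((g : Matrix ι ι R) i i * ((g⁻¹ : GL ι R) : Matrix ι ι R) i i) * hu' + hg'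

theorem commutatorElement_apply_of_covBy (hu : (u : Matrix ι ι R).IsUpperTriangular)
    (hg : (g : Matrix ι ι R).IsUpperTriangular) {i j : ι} (hij : i ⋖ j) :
    ((⁅u, g⁆ : GL ι R) : Matrix ι ι R) i j * ((g : Matrix ι ι R) j j * (u : Matrix ι ι R) j j) =
      (u : Matrix ι ι R) i j * ((g : Matrix ι ι R) j j - (g : Matrix ι ι R) i i) +
        (g : Matrix ι ι R) i j * ((u : Matrix ι ι R) i i - (u : Matrix ι ι R) j j) := by
  have hc : ⁅u, g⁆ * (g * u) = u * g := by group
  have hc' := congrArg (fun x : GL ι R ↦ (x : Matrix ι ι R) i j) hc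
  simp only [Units.val_mul] at hc'
  rw [mul_apply_of_covBy (hu.commutatorElement hg) (hg.mul hu) hij,
    mul_apply_of_covBy hg hu hij, mul_apply_of_covBy hu hg hij, mul_apply_self hg hu,
    commutatorElement_apply_self hu hg] at hc'
  linear_combination hc'

theorem commutatorElement_apply_ne_zero [NoZeroDivisors R]
    (hu : (u : Matrix ι ι R).IsUpperTriangular) (hg : (g : Matrix ι ι R).IsUpperTriangular)
    {i j : ι} (hij : i ⋖ j) (hu_diag : (u : Matrix ι ι R) i i = (u : Matrix ι ι R) j j)
    (hu_ne : (u : Matrix ι ι R) i j ≠ 0)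
    (hg_diag : (g : Matrix ι ι R) i i ≠ (g : Matrix ι ι R) j j) :
    ((⁅u, g⁆ : GL ι R) : Matrix ι ι R) i j ≠ 0 := by
  intro h
  have key := commutatorElement_apply_of_covBy hu hg hij
  rw [h, zero_mul, hu_diag, sub_self, mul_zero, add_zero] at key
  exact mul_ne_zero hu_ne (sub_ne_zero.2 hg_diag.symm) key.symm

end Matrix.IsUpperTriangular

theorem diag_eq_of_covBy_of_isNilpotent {ι R : Type*} [Fintype ι] [LinearOrder ι] [DecidableEq ι]
    [CommRing R] [NoZeroDivisors R] {N : Subgroup (GL ι R)}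
    (hN : ∀ x ∈ N, (x : Matrix ι ι R).IsUpperTriangular)
    (hN_normal : ∀ t : GL ι R, (t : Matrix ι ι R).IsUpperTriangular → ∀ x ∈ N, t⁻¹ * x * t ∈ N)
    (hN_nilp : Group.IsNilpotent N) {g : GL ι R} (hg : g ∈ N) {i j : ι} (hij : i ⋖ j) :
    (g : Matrix ι ι R).diag i = (g : Matrix ι ι R).diag j := by
  by_contra hne
  have : Nontrivial R := ⟨⟨_, _, hne⟩⟩
  let t : GL ι R := ⟨transvection i j 1, transvection i j (-1),
    by simp [transvection_mul_transvection_same _ _ hij.ne],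
    by simp [transvection_mul_transvection_same _ _ hij.ne]⟩
  have ht : (t : Matrix ι ι R).IsUpperTriangular := blockTriangular_transvection hij.le 1
  have hgT := hN g hg
  have invariant : ∀ k, let y := (((fun y ↦ ⁅y, g⁆)^[k] t⁻¹ : GL ι R) : Matrix ι ι R)
      y.IsUpperTriangular ∧ y i i = y j j ∧ y i j ≠ 0 := by
    intro k
    induction k with
    | zero =>
      refine ⟨blockTriangular_transvection hij.le (-1), ?_, ?_⟩ <;>
        simp [t, transvection, one_apply_ne, hij.ne, hij.ne']
    | succ k ih =>
      obtain ⟨hyT, hy_diag, hy_ne⟩ := ih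
      simp only [Function.iterate_succ_apply']
      exact ⟨hyT.commutatorElement hgT, by rw [hyT.commutatorElement_apply_self hgT,
        hyT.commutatorElement_apply_self hgT], hyT.commutatorElement_apply_ne_zero hgT hij
          hy_diag hy_ne hne⟩
  have hmem : ⁅t⁻¹, g⁆ ∈ N := by
    rw [commutatorElement_def, inv_inv]
    exact N.mul_mem (hN_normal t ht g hg) (N.inv_mem hg)
  obtain ⟨k, hk⟩ := Subgroup.exists_iterate_commutatorElement_eq_one hN_nilp hmem hg
  have h_ne := (invariant (k + 1)).2.2
  simp [Function.iterate_succ_apply, hk, hij.ne] at h_ne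

theorem fitting_of_triangular_group_general {R : Type*} [CommRing R] [IsDomain R] {n : ℕ}
    (N : Subgroup (GL (Fin n) R)) (hNle : N ≤ triangularGroup n R)
    (hNnormal : ∀ t ∈ triangularGroup n R, ∀ x ∈ N, t⁻¹ * x * t ∈ N)
    (hNnilp : Group.IsNilpotent N) :
    ∀ g ∈ N, ∃ α : Rˣ, ∀ i : Fin n, (g : Matrix (Fin n) (Fin n) R) i i = (α : R) := by
  intro g hg
  have hgT : (g : Matrix (Fin n) (Fin n) R).IsUpperTriangular := hNle hg
  have hdiag := eq_of_forall_covBy fun i j ↦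
    diag_eq_of_covBy_of_isNilpotent (fun x hx ↦ hNle hx) hNnormal hNnilp hg
  rcases isEmpty_or_nonempty (Fin n) with _ | ⟨⟨i₀⟩⟩
  · exact ⟨1, isEmptyElim⟩
  · obtain ⟨α, hα⟩ := IsUnit.of_mul_eq_one _ (hgT.units_apply_self_mul_inv_apply_self i₀)
    exact ⟨α, fun i ↦ (hdiag i i₀).trans hα.symm⟩

/-- Every normal nilpotent subgroup of `G = T_n(R)` (`R` an integral domain) is contained in
`UT_n(R) · Z(G)`, i.e. each of its elements is an upper triangular matrix with constant
unit diagonal; hence `Fitt(T_n(R)) = UT_n(R) · Z(T_n(R))`. -/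
theorem fitting_of_triangular_group {R : Type*} [CommRing R] [IsDomain R] {n : ℕ} (hn : 2 ≤ n)
    (N : Subgroup (GL (Fin n) R)) (hNle : N ≤ triangularGroup n R)
    (hNnormal : ∀ t ∈ triangularGroup n R, ∀ x ∈ N, t⁻¹ * x * t ∈ N)
    (hNnilp : Group.IsNilpotent N) :
    ∀ g ∈ N, ∃ α : Rˣ, ∀ i : Fin n, (g : Matrix (Fin n) (Fin n) R) i i = (α : R) :=
  fitting_of_triangular_group_general N hNle hNnormal hNnilp
end

section
/- Let R be a commutative ring with unit and n ≥ 2. The derived subgroup of G = T_n(R) is contained in UT_n(R), and it contains every transvection t_{kl}(β) with l − k ≥ 2, as well as every element t_{i,i+1}((1−α)β) with α ∈ R^×, β ∈ R. -/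
open Matrix

/-!
The diagonal of a product of upper triangular matrices is the product of the diagonals, so
`g ↦ diag g` is a homomorphism from `T_n(R)` to the abelian group `(R^×)^n`; the derived subgroup
lies in its kernel, i.e. consists of unitriangular matrices. Conversely, for `m = k + 1` the
commutator identity `[t_{km}(β), t_{ml}(1)] = t_{kl}(β)` produces the transvections with
`l - k ≥ 2`, and conjugating `t_{ij}(c)` by `diag(δ)` scales `c` by `δ_i δ_j⁻¹`, so that the
commutator of the diagonal matrix with `α` in position `i` and `t_{ij}(-β)` is `t_{ij}((1 - α)β)`.
-/

open scoped commutatorElement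

theorem Subgroup.commutatorElement_mem_map_subtype_commutator {G : Type*} [Group G]
    {H : Subgroup G} {a b : G} (ha : a ∈ H) (hb : b ∈ H) :
    ⁅a, b⁆ ∈ (_root_.commutator H).map H.subtype := by
  rw [H.map_subtype_commutator]
  exact commutator_mem_commutator ha hb

namespace Matrix

theorem BlockTriangular.diag_mul {m α : Type*} [Fintype m] [LinearOrder m]
    [NonUnitalNonAssocSemiring α] {M N : Matrix m m α}
    (hM : M.BlockTriangular id) (hN : N.BlockTriangular id) :
    (M * N).diag = M.diag * N.diag := by
  ext i
  refine (Fintype.sum_eq_single i fun k hk => ?_).trans rfl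
  show M i k * N k i = 0
  rcases lt_or_gt_of_ne hk with h | h
  · rw [hM h, zero_mul]
  · rw [hN h, mul_zero]

theorem diagonal_mul_single_mul_diagonal {ι α : Type*} [Fintype ι] [DecidableEq ι]
    [NonUnitalNonAssocSemiring α] (d e : ι → α) (i j : ι) (c : α) :
    diagonal d * single i j c * diagonal e = single i j (d i * c * e j) := by
  ext a b
  simp only [diagonal_mul, mul_diagonal, single_apply]
  split_ifs with h
  · rw [h.1, h.2]
  · simp

variable {ι R : Type*} [Fintype ι] [DecidableEq ι] [CommRing R]

namespace SpecialLinearGroup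

theorem commutatorElement_transvection {i j k : ι}
    (hij : i ≠ j) (hjk : j ≠ k) (hik : i ≠ k) (a b : R) :
    ⁅transvection hij a, transvection hjk b⁆ = transvection hik (a * b) := by
  ext : 1
  simp [commutatorElement_def, transvection_inv, transvection_coe, mul_add, add_mul,
    single_mul_single_of_ne, hij.symm, hjk.symm, hik.symm, ← single_neg]
  abel

end SpecialLinearGroup

def diagonalGL : (ι → Rˣ) →* GL ι R :=
  (Units.map (diagonalRingHom ι R : (ι → R) →* Matrix ι ι R)).comp
    MulEquiv.piUnits.symm.toMonoidHom

@[simp]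
theorem coe_diagonalGL (δ : ι → Rˣ) :
    (diagonalGL δ : Matrix ι ι R) = diagonal fun k => (δ k : R) :=
  rfl

theorem diagonalGL_mul_transvection_mul_inv (δ : ι → Rˣ) {i j : ι} (hij : i ≠ j) (c : R) :
    diagonalGL δ * SpecialLinearGroup.transvection hij c * (diagonalGL δ)⁻¹ =
      SpecialLinearGroup.transvection hij (δ i * c * ↑(δ j)⁻¹) := by
  ext : 1
  simp [← map_inv, SpecialLinearGroup.transvection_coe, mul_add, add_mul,
    diagonal_mul_single_mul_diagonal]

theorem commutatorElement_diagonalGL_transvection (δ : ι → Rˣ) {i j : ι} (hij : i ≠ j) (c : R) :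
    ⁅diagonalGL δ, (SpecialLinearGroup.transvection hij c : GL ι R)⁆ =
      SpecialLinearGroup.transvection hij ((δ i * ↑(δ j)⁻¹ - 1) * c) := by
  rw [commutatorElement_def, diagonalGL_mul_transvection_mul_inv, ← map_inv,
    SpecialLinearGroup.transvection_inv, ← map_mul, ← SpecialLinearGroup.transvection_add]
  congr 2
  ring

end Matrix

namespace triangularGroup

variable {n : ℕ} {R : Type*} [CommRing R]

theorem diagonalGL_mem (δ : Fin n → Rˣ) : diagonalGL δ ∈ triangularGroup n R :=
  blockTriangular_diagonal _

theorem transvection_mem {i j : Fin n} (hij : i ≠ j) (hle : i ≤ j) (c : R) :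
    (SpecialLinearGroup.transvection hij c : GL (Fin n) R) ∈ triangularGroup n R :=
  blockTriangular_transvection hle c

def diagMonoidHom : triangularGroup n R →* (Fin n → R) where
  toFun g := ((g : GL (Fin n) R) : Matrix (Fin n) (Fin n) R).diag
  map_one' := diag_one
  map_mul' g h := g.2.diag_mul h.2

theorem diag_eq_one_of_mem_commutator {g : triangularGroup n R}
    (hg : g ∈ commutator (triangularGroup n R)) :
    ((g : GL (Fin n) R) : Matrix (Fin n) (Fin n) R).diag = 1 :=
  congrArg Units.val <|
    Abelianization.commutator_subset_ker (diagMonoidHom (n := n) (R := R)).toHomUnits hg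

end triangularGroup

theorem derived_subgroup_triangular_group_general {R : Type*} [CommRing R] {n : ℕ} :
    (let D : Subgroup (GL (Fin n) R) :=
      Subgroup.map (triangularGroup n R).subtype (commutator ↥(triangularGroup n R))
     (∀ g ∈ D, ∀ i : Fin n, (g : Matrix (Fin n) (Fin n) R) i i = 1) ∧
       (∀ k l : Fin n, (k : ℕ) + 2 ≤ (l : ℕ) → ∀ β : R, ∀ u : GL (Fin n) R,
         (u : Matrix (Fin n) (Fin n) R) =
             (1 : Matrix (Fin n) (Fin n) R) + Matrix.single k l β → u ∈ D) ∧
       (∀ i j : Fin n, (i : ℕ) + 1 = (j : ℕ) → ∀ (α : Rˣ) (β : R), ∀ u : GL (Fin n) R,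
         (u : Matrix (Fin n) (Fin n) R) =
             (1 : Matrix (Fin n) (Fin n) R) +
               Matrix.single i j ((1 - (α : R)) * β) → u ∈ D)) := by
  intro D
  refine ⟨?_, ?_, ?_⟩
  · rintro _ ⟨g, hg, rfl⟩ i
    exact congrFun (triangularGroup.diag_eq_one_of_mem_commutator hg) i
  · intro k l hkl β u hu
    let m : Fin n := ⟨k + 1, by omega⟩
    have hkm : k < m := Fin.lt_def.2 (Nat.lt_succ_self _)
    have hml : m < l := Fin.lt_def.2 (by simp only [m]; omega)
    obtain rfl : u = SpecialLinearGroup.transvection (hkm.trans hml).ne β := Units.ext hu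
    rw [← mul_one β, ← SpecialLinearGroup.commutatorElement_transvection hkm.ne hml.ne,
      map_commutatorElement]
    exact Subgroup.commutatorElement_mem_map_subtype_commutator
      (triangularGroup.transvection_mem _ hkm.le _)
      (triangularGroup.transvection_mem _ hml.le _)
  · intro i j hij α β u hu
    have hlt : i < j := Fin.lt_def.2 (by omega)
    obtain rfl : u = SpecialLinearGroup.transvection hlt.ne ((1 - (α : R)) * β) := Units.ext hu
    have key := commutatorElement_diagonalGL_transvection (Pi.mulSingle i α) hlt.ne (-β)
    rw [Pi.mulSingle_eq_same, Pi.mulSingle_eq_of_ne hlt.ne', inv_one, Units.val_one, mul_one,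
      show ((α : R) - 1) * -β = (1 - α) * β by ring] at key
    rw [← key]
    exact Subgroup.commutatorElement_mem_map_subtype_commutator
      (triangularGroup.diagonalGL_mem _) (triangularGroup.transvection_mem _ hlt.le _)

/-- The derived subgroup of `T_n(R)` is contained in `UT_n(R)` (all its elements are
unitriangular), contains every transvection `t_{kl}(β)` with `l - k ≥ 2`, and contains every
`t_{i,i+1}((1-α)β)` with `α ∈ R^×`, `β ∈ R`. -/
theorem derived_subgroup_triangular_group {R : Type*} [CommRing R] {n : ℕ} (hn : 2 ≤ n) :
    (let D : Subgroup (GL (Fin n) R) :=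
      Subgroup.map (triangularGroup n R).subtype (commutator ↥(triangularGroup n R))
     (∀ g ∈ D, ∀ i : Fin n, (g : Matrix (Fin n) (Fin n) R) i i = 1) ∧
       (∀ k l : Fin n, (k : ℕ) + 2 ≤ (l : ℕ) → ∀ β : R, ∀ u : GL (Fin n) R,
         (u : Matrix (Fin n) (Fin n) R) =
             (1 : Matrix (Fin n) (Fin n) R) + Matrix.single k l β → u ∈ D) ∧
       (∀ i j : Fin n, (i : ℕ) + 1 = (j : ℕ) → ∀ (α : Rˣ) (β : R), ∀ u : GL (Fin n) R,
         (u : Matrix (Fin n) (Fin n) R) =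
             (1 : Matrix (Fin n) (Fin n) R) +
               Matrix.single i j ((1 - (α : R)) * β) → u ∈ D)) :=
  derived_subgroup_triangular_group_general
end

section
/- Let G be a group and c ∈ ℕ. For g ∈ G, the normal closure ⟨g⟩^G is nilpotent of class at most c if and only if for all y₁, …, y_{c+1} ∈ G the left-normed commutator [y₁⁻¹gy₁, y₂⁻¹gy₂, …, y_{c+1}⁻¹gy_{c+1}] equals 1. -/
/-!
If `S` is a conjugation-invariant set, the `k`-th term of the lower central series of
`closure S` is generated by the left-normed commutators of `k + 1` elements of `S`. Inductively,
the subgroup these commutators generate is normal, and modulo it every generator of the `k`-th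
term commutes with every element of `S`, hence the whole `k`-th term commutes with `closure S`.
The normal closure of `g` is the closure of the conjugacy class of `g`, which gives the theorem.
-/

open scoped commutatorElement

/-- The left-normed commutator `[[…[[x₁,x₂],x₃],…],x_c]` of a list of group elements. -/
def leftNormedComm {G : Type*} [Group G] : List G → G
  | [] => 1
  | x :: xs => xs.foldl (fun a b => ⁅a, b⁆) x

open Group Set

section

variable {G : Type*} [Group G]

@[simp]
lemma leftNormedComm_singleton (x : G) : leftNormedComm [x] = x := rfl

lemma leftNormedComm_concat {l : List G} (hl : l ≠ []) (z : G) :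
    leftNormedComm (l.concat z) = ⁅leftNormedComm l, z⁆ := by
  obtain ⟨x, xs, rfl⟩ := List.exists_cons_of_ne_nil hl
  simp [leftNormedComm, List.foldl_append]

lemma map_leftNormedComm {H : Type*} [Group H] (f : G →* H) (l : List G) :
    f (leftNormedComm l) = leftNormedComm (l.map f) := by
  induction l using List.reverseRecOn with
  | nil => simp [leftNormedComm]
  | append_singleton l z ih =>
    rcases eq_or_ne l [] with rfl | hl
    · rfl
    · rw [← List.concat_eq_append, leftNormedComm_concat hl, List.map_concat,
        leftNormedComm_concat (by simpa using hl), map_commutatorElement, ih]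

lemma leftNormedComm_ofFn_succ {k : ℕ} (y : Fin (k + 2) → G) :
    leftNormedComm (List.ofFn y) =
      ⁅leftNormedComm (List.ofFn fun i : Fin (k + 1) => y i.castSucc), y (Fin.last _)⁆ := by
  rw [List.ofFn_succ', leftNormedComm_concat (by simp)]

/-- Indexed like the lower central series: `leftNormedComms S k` has `k + 1` entries. -/
def leftNormedComms (S : Set G) (k : ℕ) : Set G :=
  (fun y : Fin (k + 1) → G => leftNormedComm (List.ofFn y)) '' univ.pi fun _ => S

lemma leftNormedComms_zero (S : Set G) : leftNormedComms S 0 = S := by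
  ext x
  constructor
  · rintro ⟨y, hy, rfl⟩
    simpa using hy 0
  · intro hx
    exact ⟨fun _ => x, fun _ _ => hx, by simp⟩

lemma leftNormedComms_succ (S : Set G) (k : ℕ) :
    leftNormedComms S (k + 1) = {⁅t, s⁆ | (t ∈ leftNormedComms S k) (s ∈ S)} := by
  ext x
  constructor
  · rintro ⟨y, hy, rfl⟩
    dsimp only
    rw [leftNormedComm_ofFn_succ]
    exact ⟨_, ⟨_, fun i _ => hy _ trivial, rfl⟩, _, hy _ trivial, rfl⟩
  · rintro ⟨_, ⟨y, hy, rfl⟩, s, hs, rfl⟩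
    refine ⟨Fin.snoc y s, fun i _ => ?_, ?_⟩
    · induction i using Fin.lastCases <;> simp [hy _ trivial, hs]
    · simp only [leftNormedComm_ofFn_succ, Fin.snoc_castSucc, Fin.snoc_last]

lemma conj_mem_leftNormedComms {S : Set G} (hS : ∀ s ∈ S, ∀ x : G, x * s * x⁻¹ ∈ S)
    {k : ℕ} {t : G} (ht : t ∈ leftNormedComms S k) (x : G) : x * t * x⁻¹ ∈ leftNormedComms S k := by
  obtain ⟨y, hy, rfl⟩ := ht
  refine ⟨MulAut.conj x ∘ y, fun i _ => hS _ (hy i trivial) x, ?_⟩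
  dsimp only
  rw [← List.map_ofFn, ← MulEquiv.coe_toMonoidHom, ← map_leftNormedComm]
  rfl

lemma univ_pi_conjugatesOfSet_singleton (ι : Type*) (g : G) :
    univ.pi (fun _ : ι => conjugatesOfSet {g}) =
      range fun y : ι → G => fun i => (y i)⁻¹ * g * y i := by
  ext z
  simp only [mem_univ_pi, mem_conjugatesOfSet_iff, mem_singleton_iff, exists_eq_left, isConj_iff,
    mem_range, funext_iff]
  rw [Classical.skolem]
  exact ⟨fun ⟨c, hc⟩ => ⟨fun i => (c i)⁻¹, by simpa using hc⟩,
    fun ⟨y, hy⟩ => ⟨fun i => (y i)⁻¹, by simpa using hy⟩⟩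

namespace Subgroup

lemma closure_normal_of_conj_mem {S : Set G} (hS : ∀ s ∈ S, ∀ x : G, x * s * x⁻¹ ∈ S) :
    (closure S).Normal := by
  have hconj : conjugatesOfSet S = S := by
    refine Subset.antisymm (fun x hx => ?_) subset_conjugatesOfSet
    obtain ⟨s, hs, hsx⟩ := mem_conjugatesOfSet_iff.mp hx
    obtain ⟨c, rfl⟩ := isConj_iff.mp hsx
    exact hS s hs c
  rw [← hconj]
  exact normalClosure_normal

lemma commutator_closure_le {A B : Set G} {M : Subgroup G} [M.Normal]
    (h : ∀ a ∈ A, ∀ b ∈ B, ⁅a, b⁆ ∈ M) : ⁅closure A, closure B⁆ ≤ M := by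
  rw [← QuotientGroup.ker_mk' M, ← map_eq_bot_iff, map_commutator, MonoidHom.map_closure,
    MonoidHom.map_closure, commutator_eq_bot_iff_le_centralizer, centralizer_closure, closure_le]
  rintro _ ⟨a, ha, rfl⟩
  rw [SetLike.mem_coe, mem_centralizer_iff]
  rintro _ ⟨b, hb, rfl⟩
  rw [eq_comm, ← commutatorElement_eq_one_iff_mul_comm, ← map_commutatorElement]
  exact (QuotientGroup.eq_one_iff _).mpr (h a ha b hb)

lemma lowerCentralSeries_closure_of_conj_mem {S : Set G}
    (hS : ∀ s ∈ S, ∀ x : G, x * s * x⁻¹ ∈ S) (k : ℕ) :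
    (closure S).lowerCentralSeries k = closure (leftNormedComms S k) := by
  induction k with
  | zero => rw [lowerCentralSeries_zero, leftNormedComms_zero]
  | succ k ih =>
    have := closure_normal_of_conj_mem fun _ ht x => conj_mem_leftNormedComms hS (k := k + 1) ht x
    rw [lowerCentralSeries_succ, ih]
    refine le_antisymm (commutator_closure_le fun t ht s hs => subset_closure ?_) ?_
    · rw [leftNormedComms_succ]
      exact ⟨t, ht, s, hs, rfl⟩
    · rw [closure_le, leftNormedComms_succ]
      rintro _ ⟨t, ht, s, hs, rfl⟩
      exact commutator_mem_commutator (subset_closure ht) (subset_closure hs)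

lemma lowerCentralSeries_normalClosure (s : Set G) (k : ℕ) :
    (normalClosure s).lowerCentralSeries k = closure (leftNormedComms (conjugatesOfSet s) k) :=
  lowerCentralSeries_closure_of_conj_mem (fun _ h _ => conj_mem_conjugatesOfSet h) k

end Subgroup

end

/-- The normal closure `⟨g⟩^G` is nilpotent of class at most `c` iff for all
`y₁, …, y_{c+1} ∈ G` the left-normed commutator
`[y₁⁻¹gy₁, …, y_{c+1}⁻¹gy_{c+1}]` is trivial. -/
theorem normalClosure_nilpotent_iff {G : Type*} [Group G] (g : G) (c : ℕ) :
    (⊤ : Subgroup ↥(Subgroup.normalClosure ({g} : Set G))).lowerCentralSeries c = ⊥ ↔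
      ∀ y : Fin (c + 1) → G,
        leftNormedComm (List.ofFn (fun i => (y i)⁻¹ * g * y i)) = 1 := by
  rw [← Subgroup.map_subtype_inj, Subgroup.map_bot, Subgroup.top_subtype_lowerCentralSeries,
    Subgroup.lowerCentralSeries_normalClosure, leftNormedComms,
    univ_pi_conjugatesOfSet_singleton, ← range_comp, Subgroup.closure_eq_bot_iff,
    range_subset_iff]
  rfl
end

section
/- Let O be the ring of integers of a number field, let λ₁, …, λ_s be distinct elements of O, and let δ ∈ O be nonzero. Then there are only finitely many α ∈ O such that α − λ_i divides δ in O for all i = 1, …, s, where s is the degree of the number field over ℚ. -/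
/-!
Choose `e > 0` with `|σ λᵢ - σ λⱼ| ≥ 2e` for all embeddings `σ : K → ℂ` and all `i ≠ j`. Then for
each `σ` the conjugate `σ α` is `e`-close to at most one `σ λᵢ`. Fix an embedding `σ₀`: the
remaining `s - 1` embeddings rule out at most `s - 1` indices, so some `λᵢ` is `e`-far from `α`
under every `σ ≠ σ₀`. As `α - λᵢ ∣ δ`, the product of all `|σ (α - λᵢ)|` is at most `|N δ|`, hence
`|σ₀ (α - λᵢ)| ≤ |N δ| / e^(s-1)`. So all conjugates of `α` are uniformly bounded, and there are
only finitely many such algebraic integers.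
-/

open NumberField Finset Module

theorem Finite.exists_pos_forall_le {α : Type*} [Finite α] {g : α → ℝ} (hg : ∀ a, 0 < g a) :
    ∃ e > 0, ∀ a, e ≤ g a := by
  cases isEmpty_or_nonempty α
  · exact ⟨1, one_pos, isEmptyElim⟩
  · obtain ⟨a₀, ha₀⟩ := Finite.exists_min g
    exact ⟨g a₀, hg a₀, ha₀⟩

theorem exists_pos_forall_two_mul_le_norm_sub {S ι E : Type*} [Finite S] [Finite ι]
    [NormedAddCommGroup E] {z : S → ι → E} (hz : ∀ σ, Function.Injective (z σ)) :
    ∃ e > 0, ∀ σ i j, i ≠ j → 2 * e ≤ ‖z σ i - z σ j‖ := by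
  obtain ⟨e, he, hle⟩ := Finite.exists_pos_forall_le
    (g := fun p : S × {q : ι × ι // q.1 ≠ q.2} => ‖z p.1 p.2.1.1 - z p.1 p.2.1.2‖ / 2)
    fun p => by simpa [sub_eq_zero] using (hz p.1).ne p.2.2
  exact ⟨e, he, fun σ i j hij => by linarith [hle (σ, ⟨(i, j), hij⟩)]⟩

theorem eq_of_norm_sub_lt_of_norm_sub_lt {ι E : Type*} [SeminormedAddCommGroup E] {z : ι → E}
    {e : ℝ} (hz : ∀ i j, i ≠ j → 2 * e ≤ ‖z i - z j‖) {w : E} {i j : ι}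
    (hi : ‖w - z i‖ < e) (hj : ‖w - z j‖ < e) : i = j := by
  by_contra hij
  have := norm_sub_le_norm_sub_add_norm_sub (z i) w (z j)
  rw [norm_sub_rev (z i) w] at this
  linarith [hz i j hij]

theorem Fintype.exists_forall_ne_imp_not_of_card_le {S ι : Type*} [Fintype S] [Fintype ι]
    (hcard : Fintype.card S ≤ Fintype.card ι) (σ₀ : S) {P : S → ι → Prop}
    (hP : ∀ σ i j, P σ i → P σ j → i = j) : ∃ i, ∀ σ, σ ≠ σ₀ → ¬ P σ i := by
  classical
  by_contra! h
  choose f hf₀ hf using h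
  have hinj : Function.Injective fun i => (⟨f i, hf₀ i⟩ : {σ // σ ≠ σ₀}) :=
    fun i j hij => by
      have hfij : f i = f j := Subtype.ext_iff.mp hij
      exact hP (f i) i j (hf i) (hfij ▸ hf j)
  have := Fintype.card_le_of_injective _ hinj
  rw [Fintype.card_subtype_compl, Fintype.card_subtype_eq] at this
  have : 0 < Fintype.card S := Fintype.card_pos_iff.mpr ⟨σ₀⟩
  omega

namespace NumberField

variable {K : Type*} [Field K] [NumberField K]

theorem prod_norm_embeddings_eq_abs_norm (x : K) :
    ∏ φ : K →+* ℂ, ‖φ x‖ = ((|Algebra.norm ℚ x| : ℚ) : ℝ) := by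
  rw [Fintype.prod_equiv (RingHom.equivRatAlgHom K ℂ) (fun φ : K →+* ℂ => ‖φ x‖)
    (fun σ : K →ₐ[ℚ] ℂ => ‖σ x‖) fun φ => rfl, ← norm_prod, ← Algebra.norm_eq_prod_embeddings,
    eq_ratCast, Rat.cast_abs, Complex.norm_ratCast]

namespace RingOfIntegers

theorem abs_norm_le_of_dvd {x δ : 𝓞 K} (h : x ∣ δ) (hδ : δ ≠ 0) :
    |Algebra.norm ℤ x| ≤ |Algebra.norm ℤ δ| :=
  Int.le_of_dvd (abs_pos.mpr (Algebra.norm_ne_zero_iff.mpr hδ))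
    ((abs_dvd_abs _ _).mpr (map_dvd _ h))

theorem norm_embedding_mul_pow_le_of_dvd {x δ : 𝓞 K} (hx : x ∣ δ) (hδ : δ ≠ 0)
    (σ₀ : K →+* ℂ) {e : ℝ} (he : 0 ≤ e) (hσ : ∀ σ : K →+* ℂ, σ ≠ σ₀ → e ≤ ‖σ x‖) :
    ‖σ₀ x‖ * e ^ (finrank ℚ K - 1) ≤ |(Algebra.norm ℤ δ : ℝ)| := by
  classical
  calc ‖σ₀ x‖ * e ^ (finrank ℚ K - 1) = ‖σ₀ x‖ * ∏ _σ ∈ univ.erase σ₀, e := by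
        rw [prod_const, card_erase_of_mem (mem_univ _), card_univ, Embeddings.card]
    _ ≤ ‖σ₀ x‖ * ∏ σ ∈ univ.erase σ₀, ‖σ x‖ := by
        gcongr with σ hσ₀
        exact hσ σ (ne_of_mem_erase hσ₀)
    _ = ∏ σ : K →+* ℂ, ‖σ x‖ := mul_prod_erase _ (fun σ : K →+* ℂ => ‖σ x‖) (mem_univ _)
    _ = |(Algebra.norm ℤ x : ℝ)| := by
        rw [prod_norm_embeddings_eq_abs_norm, ← Algebra.coe_norm_int, Rat.cast_abs,
          Rat.cast_intCast]
    _ ≤ |(Algebra.norm ℤ δ : ℝ)| := by exact_mod_cast abs_norm_le_of_dvd hx hδ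

theorem finite_setOf_forall_sub_dvd {ι : Type*} [Fintype ι]
    (hcard : finrank ℚ K ≤ Fintype.card ι) {lam : ι → 𝓞 K} (hlam : Function.Injective lam)
    {δ : 𝓞 K} (hδ : δ ≠ 0) : {α : 𝓞 K | ∀ i, (α - lam i) ∣ δ}.Finite := by
  obtain ⟨e, he, hsep⟩ := exists_pos_forall_two_mul_le_norm_sub
    (z := fun (σ : K →+* ℂ) i => σ (lam i))
    fun σ => σ.injective.comp (coe_injective.comp hlam)
  set L := ∑ σ : K →+* ℂ, ∑ i, ‖σ (lam i)‖
  have hL (σ : K →+* ℂ) (i : ι) : ‖σ (lam i)‖ ≤ L :=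
    (single_le_sum (f := fun j => ‖σ (lam j)‖) (fun _ _ => norm_nonneg _) (mem_univ i)).trans
      (single_le_sum (f := fun σ : K →+* ℂ => ∑ j, ‖σ (lam j)‖)
        (fun _ _ => sum_nonneg fun _ _ => norm_nonneg _) (mem_univ σ))
  set B := |(Algebra.norm ℤ δ : ℝ)| / e ^ (finrank ℚ K - 1) + L
  refine ((Embeddings.finite_of_norm_le K ℂ B).preimage coe_injective.injOn).subset
    fun α hα => ⟨α.isIntegral_coe, fun σ₀ => ?_⟩
  obtain ⟨i, hfar⟩ := Fintype.exists_forall_ne_imp_not_of_card_le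
    ((Embeddings.card K ℂ).trans_le hcard) σ₀ (P := fun σ i => ‖σ α - σ (lam i)‖ < e)
    fun σ _ _ => eq_of_norm_sub_lt_of_norm_sub_lt (hsep σ)
  have hnear : ‖σ₀ ((α - lam i : 𝓞 K) : K)‖ * e ^ (finrank ℚ K - 1) ≤ |(Algebra.norm ℤ δ : ℝ)| :=
    norm_embedding_mul_pow_le_of_dvd (hα i) hδ σ₀ he.le
      fun σ hσ => by simpa using not_lt.mp (hfar σ hσ)
  calc ‖σ₀ α‖ ≤ ‖σ₀ ((α - lam i : 𝓞 K) : K)‖ + ‖σ₀ (lam i)‖ := by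
        simpa using norm_add_le (σ₀ ((α - lam i : 𝓞 K) : K)) (σ₀ (lam i))
    _ ≤ B := add_le_add ((le_div_iff₀ (by positivity)).mpr hnear) (hL σ₀ i)

end RingOfIntegers

end NumberField

/-- Let `O` be the ring of integers of a number field of degree `s` over `ℚ`,
`λ₁, …, λ_s` distinct elements of `O`, and `δ ∈ O` nonzero. Then only finitely many
`α ∈ O` satisfy `(α - λᵢ) ∣ δ` for all `i`. -/
theorem finite_divisors_shift {K : Type*} [Field K] [NumberField K]
    {s : ℕ} (hs : s = Module.finrank ℚ K)
    (lam : Fin s → 𝓞 K) (hlam : Function.Injective lam)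
    (δ : 𝓞 K) (hδ : δ ≠ 0) :
    {α : 𝓞 K | ∀ i : Fin s, (α - lam i) ∣ δ}.Finite :=
  RingOfIntegers.finite_setOf_forall_sub_dvd (by rw [Fintype.card_fin, hs]) hlam hδ
end

section
/- Let O be the ring of integers of a number field, X a finite set of elements of O each different from 0 and 1, and λ ∈ O a nonzero element that is not a root of unity. Then there exists a natural number n such that λⁿ − α is not a unit of O for all α ∈ X. -/
/-!
If every `λ ^ n - αₙ` were a unit, the product of `‖φ (λ ^ n - αₙ)‖` over the complex embeddings
`φ` would be `1`. By Kronecker's theorem some `‖φ λ‖ > 1`, and that factor grows like `‖φ λ‖ ^ n`,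
so the smallest factor tends to `0`. By pigeonhole, the pair (`αₙ`, minimising embedding) recurs
with a bounded gap `k`, so for one embedding `φ` both `φ λ ^ i` and `φ λ ^ (i + k)` come arbitrarily
close to the same nonzero `φ α`; hence `φ λ ^ k = 1`, and `λ ^ k = 1`.
-/

open NumberField Finset Filter

theorem Filter.frequently_atTop_exists_add_eq {β : Type*} (p : ℕ → β) (T : Finset β)
    (hp : ∀ n, p n ∈ T) : ∃ k > 0, ∃ c ∈ T, ∃ᶠ i in atTop, p i = c ∧ p (i + k) = c := by
  have hwindow : ∀ N, ∃ i ≥ N, ∃ k ∈ Icc 1 #T, p (i + k) = p i := by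
    intro N
    obtain ⟨j₁, hj₁, j₂, hj₂, hne, heq⟩ := exists_ne_map_eq_of_card_lt_of_maps_to
      (s := range (#T + 1)) (by simp) (f := fun j => p (N + j)) fun j _ => hp (N + j)
    rw [mem_range] at hj₁ hj₂
    wlog hlt : j₁ < j₂ generalizing j₁ j₂
    · exact this j₂ hj₂ j₁ hj₁ hne.symm heq.symm (hne.lt_or_gt.resolve_left hlt)
    refine ⟨N + j₁, by omega, j₂ - j₁, mem_Icc.2 ⟨by omega, by omega⟩, ?_⟩
    rw [show N + j₁ + (j₂ - j₁) = N + j₂ by omega]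
    exact heq.symm
  have hfreq : ∃ᶠ i in atTop, ∃ k ∈ Icc 1 #T, ∃ c ∈ T, p i = c ∧ p (i + k) = c :=
    frequently_atTop.2 fun N =>
      (hwindow N).imp fun i ⟨hi, k, hk, h⟩ => ⟨hi, k, hk, p i, hp i, rfl, h⟩
  simp only [frequently_exists_finset] at hfreq
  obtain ⟨k, hk, hc⟩ := hfreq
  exact ⟨k, (mem_Icc.1 hk).1, hc⟩

theorem exists_lt_of_prod_eq_one {ι : Type*} [Fintype ι] (f : ι → ℝ) (hprod : ∏ i, f i = 1)
    {δ : ℝ} (hδ : 0 < δ) {i₀ : ι} (hi₀ : 1 < f i₀ * δ ^ (Fintype.card ι - 1)) :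
    ∃ i, f i < δ := by
  classical
  by_contra! h
  have : f i₀ * δ ^ (Fintype.card ι - 1) ≤ ∏ i, f i := by
    rw [← mul_prod_erase univ f (mem_univ i₀), ← card_univ, ← card_erase_of_mem (mem_univ i₀),
      ← prod_const]
    gcongr with i
    · exact hδ.le.trans (h i₀)
    · exact h i
  linarith

theorem norm_pow_sub_one_mul_le {𝕜 : Type*} [NormedField 𝕜] {z b : 𝕜} {i k : ℕ} {δ : ℝ}
    (h₁ : ‖z ^ i - b‖ ≤ δ) (h₂ : ‖z ^ (i + k) - b‖ ≤ δ) : (‖b‖ - δ) * ‖z ^ k - 1‖ ≤ 2 * δ := by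
  have hzi : ‖b‖ - δ ≤ ‖z ^ i‖ := by linarith [norm_sub_norm_le b (z ^ i), norm_sub_rev (z ^ i) b]
  calc (‖b‖ - δ) * ‖z ^ k - 1‖ ≤ ‖z ^ i‖ * ‖z ^ k - 1‖ := by gcongr
    _ = ‖(z ^ (i + k) - b) - (z ^ i - b)‖ := by rw [← norm_mul]; congr 1; ring
    _ ≤ ‖z ^ (i + k) - b‖ + ‖z ^ i - b‖ := norm_sub_le _ _
    _ ≤ 2 * δ := by linarith

theorem pow_eq_one_of_forall_exists_norm_pow_sub_le {𝕜 : Type*} [NormedField 𝕜] {z b : 𝕜}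
    (hb : b ≠ 0) {k : ℕ} (h : ∀ δ > 0, ∃ i, ‖z ^ i - b‖ ≤ δ ∧ ‖z ^ (i + k) - b‖ ≤ δ) :
    z ^ k = 1 := by
  by_contra hne
  have hx : 0 < ‖z ^ k - 1‖ := norm_pos_iff.2 (sub_ne_zero.2 hne)
  have hm : 0 < ‖b‖ := norm_pos_iff.2 hb
  set δ := ‖b‖ * ‖z ^ k - 1‖ / (2 * (‖z ^ k - 1‖ + 2)) with hδ
  obtain ⟨i, h₁, h₂⟩ := h δ (by positivity)
  have key := norm_pow_sub_one_mul_le h₁ h₂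
  have : δ * (‖z ^ k - 1‖ + 2) = ‖b‖ * ‖z ^ k - 1‖ / 2 := by rw [hδ]; field_simp
  linarith [mul_pos hm hx]

theorem eventually_exists_norm_pow_sub_lt {ι 𝕜 : Type*} [Fintype ι] [NormedField 𝕜]
    (z : ι → 𝕜) (a : ℕ → ι → 𝕜) {i₀ : ι} (hi₀ : 1 < ‖z i₀‖) (A : ℝ) (hA : ∀ n, ‖a n i₀‖ ≤ A)
    (hprod : ∀ n, ∏ i, ‖z i ^ n - a n i‖ = 1) {δ : ℝ} (hδ : 0 < δ) :
    ∀ᶠ n in atTop, ∃ i, ‖z i ^ n - a n i‖ < δ := by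
  have hgrow : Tendsto (fun n => (‖z i₀‖ ^ n - A) * δ ^ (Fintype.card ι - 1)) atTop atTop :=
    (tendsto_atTop_add_const_right _ (-A) (tendsto_pow_atTop_atTop_of_one_lt hi₀)).atTop_mul_const
      (pow_pos hδ _)
  filter_upwards [hgrow.eventually_gt_atTop 1] with n hn
  refine exists_lt_of_prod_eq_one _ (hprod n) hδ (i₀ := i₀) (hn.trans_le ?_)
  gcongr
  calc ‖z i₀‖ ^ n - A ≤ ‖z i₀ ^ n‖ - ‖a n i₀‖ := by rw [norm_pow]; linarith [hA n]
    _ ≤ _ := norm_sub_norm_le _ _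

theorem exists_pow_eq_one_of_prod_norm_pow_sub_eq_one {ι 𝕜 : Type*} [Fintype ι] [NormedField 𝕜]
    (z : ι → 𝕜) (hz : ∃ i, 1 < ‖z i‖) (a : ℕ → ι → 𝕜) (T : Finset (ι → 𝕜))
    (haT : ∀ n, a n ∈ T) (hT : ∀ b ∈ T, ∀ i, b i ≠ 0)
    (hprod : ∀ n, ∏ i, ‖z i ^ n - a n i‖ = 1) : ∃ i, ∃ k > 0, z i ^ k = 1 := by
  classical
  obtain ⟨i₀, hi₀⟩ := hz
  obtain ⟨A, hA⟩ := (T.image fun b => ‖b i₀‖).bddAbove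
  have : Nonempty ι := ⟨i₀⟩
  choose g hg using fun n => Finite.exists_min fun i => ‖z i ^ n - a n i‖
  have hg_small (δ : ℝ) (hδ : 0 < δ) : ∀ᶠ n in atTop, ‖z (g n) ^ n - a n (g n)‖ < δ :=
    (eventually_exists_norm_pow_sub_lt z a hi₀ A (fun n => hA (mem_image_of_mem _ (haT n)))
      hprod hδ).mono fun n ⟨i, hi⟩ => (hg n i).trans_lt hi
  obtain ⟨k, hk, ⟨b, i⟩, hbi, hrec⟩ := frequently_atTop_exists_add_eq (fun n => (a n, g n))
    (T ×ˢ univ) fun n => mk_mem_product (haT n) (mem_univ _)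
  refine ⟨i, k, hk, pow_eq_one_of_forall_exists_norm_pow_sub_le (hT b (mem_product.1 hbi).1 i)
    fun δ hδ => ?_⟩
  obtain ⟨n, ⟨hn, hnk⟩, hsmall, hsmall_k⟩ := (hrec.and_eventually
    ((hg_small δ hδ).and ((tendsto_add_atTop_nat k).eventually (hg_small δ hδ)))).exists
  simp only [Prod.ext_iff] at hn hnk
  refine ⟨n, ?_, ?_⟩
  · simpa [hn.1, hn.2] using hsmall.le
  · simpa [hnk.1, hnk.2] using hsmall_k.le

section NumberField

variable {K : Type*} [Field K] [NumberField K]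

theorem NumberField.prod_norm_embedding_eq_one_of_isUnit {u : 𝓞 K} (hu : IsUnit u) :
    ∏ φ : K →+* ℂ, ‖φ u‖ = 1 := by
  have h := congr_arg (‖·‖) (Algebra.norm_eq_prod_embeddings ℚ ℂ (u : K))
  rw [norm_prod, ← Fintype.prod_equiv (RingHom.equivRatAlgHom K ℂ) (fun φ => ‖φ u‖) _
    fun _ => rfl] at h
  rw [← h, eq_ratCast, Complex.norm_ratCast, ← RingOfIntegers.coe_norm, ← Rat.cast_abs,
    isUnit_iff_norm.1 hu, Rat.cast_one]

theorem NumberField.exists_one_lt_norm_embedding {x : 𝓞 K} (hx : x ≠ 0)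
    (hroot : ∀ n : ℕ, 0 < n → x ^ n ≠ 1) : ∃ φ : K →+* ℂ, 1 < ‖φ x‖ := by
  by_contra! h
  obtain ⟨n, hn, hxn⟩ := Embeddings.pow_eq_one_of_norm_le_one K ℂ
    (RingOfIntegers.coe_ne_zero_iff.2 hx) x.isIntegral_coe h
  exact hroot n hn (by exact_mod_cast hxn)

end NumberField

/-- Let `O` be the ring of integers of a number field, `X` a finite set of elements of `O`
each different from `0` and `1`, and `λ ∈ O` nonzero and not a root of unity. Then there is a
natural number `n` such that `λ^n - α` is not a unit of `O` for all `α ∈ X`. -/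
theorem exists_pow_sub_not_unit {K : Type*} [Field K] [NumberField K]
    (X : Finset (𝓞 K)) (hX : ∀ α ∈ X, α ≠ 0 ∧ α ≠ 1)
    (lam : 𝓞 K) (hlam : lam ≠ 0) (hroot : ∀ n : ℕ, 0 < n → lam ^ n ≠ 1) :
    ∃ n : ℕ, ∀ α ∈ X, ¬IsUnit (lam ^ n - α) := by
  by_contra! h
  choose f hfX hunit using h
  have hX₀ : ∀ b ∈ X.image fun (α : 𝓞 K) (φ : K →+* ℂ) => φ α, ∀ φ, b φ ≠ 0 := by
    rintro _ hb φ
    obtain ⟨α, hα, rfl⟩ := mem_image.1 hb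
    simpa using (hX α hα).1
  obtain ⟨φ, k, hk, hφk⟩ := exists_pow_eq_one_of_prod_norm_pow_sub_eq_one
    (fun φ : K →+* ℂ => φ lam) (exists_one_lt_norm_embedding hlam hroot) (fun n φ => φ (f n))
    _ (fun n => mem_image_of_mem _ (hfX n)) hX₀
    fun n => by simpa using prod_norm_embedding_eq_one_of_isUnit (hunit n)
  have : ((lam ^ k : 𝓞 K) : K) = 1 := φ.injective (by simpa using hφk)
  exact hroot k hk (by exact_mod_cast this)
end
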